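/- arXiv:1912.02103 — 3 statements merged into one kernel-verified Lean document; each statement's English description precedes it below -/
import Mathlib

section
/- Let B > 0, n ∈ ℕ, and equip the cube [0,B]^n ⊆ ℝ^n with the sup-metric. For k ∈ {1,…,n} let F_k^+ = {x ∈ [0,B]^n : x_k = B} and F_k^- = {x ∈ [0,B]^n : x_k = 0} be the corresponding pair of opposite faces. Let 0 < ε < B/6, let L be a subset of [0,B]^n, and let U be an ε-disjoint family of subsets of L with diam(U) ≤ B/3 for every U ∈ U. Then there exists an ε-partition L' of L between F_k^+ ∩ L and F_k^- ∩ L such that L' ⊆ L ∩ (⋃U)^c. -/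
open Metric Set Filter ENNReal

noncomputable section

namespace AsympPaper

/-- The distance between two subsets of a (pseudo)metric space,
`d(A,B) = inf {dist a b : a ∈ A, b ∈ B}`, valued in `ℝ≥0∞` (it is `∞` if `A` or `B` is empty). -/
def setEDist {X : Type*} [PseudoMetricSpace X] (A B : Set X) : ℝ≥0∞ :=
  ⨅ a ∈ A, ⨅ b ∈ B, edist a b

/-- A family `𝒰` of subsets of a metric space is `r`-disjoint if `d(U,V) > r`
for all distinct `U, V ∈ 𝒰`. -/
def RDisjoint {X : Type*} [PseudoMetricSpace X] (r : ℝ) (𝒰 : Set (Set X)) : Prop :=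
  ∀ U ∈ 𝒰, ∀ V ∈ 𝒰, U ≠ V → ENNReal.ofReal r < setEDist U V

/-- A family `𝒰` of subsets of a metric space is uniformly bounded if
`sup {diam U : U ∈ 𝒰} < ∞`. -/
def UniformlyBdd {X : Type*} [PseudoMetricSpace X] (𝒰 : Set (Set X)) : Prop :=
  ∃ R : ℝ, ∀ U ∈ 𝒰, ∀ x ∈ U, ∀ y ∈ U, dist x y ≤ R

/-- `Msub M σ` is the set `M^σ = {τ ∈ Fin ℕ : τ ∪ σ ∈ M and τ ∩ σ = ∅}`,
where `Fin ℕ` is the collection of finite nonempty subsets of `ℕ`. -/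
def Msub (M : Set (Finset ℕ)) (σ : Finset ℕ) : Set (Finset ℕ) :=
  {τ | τ.Nonempty ∧ τ ∪ σ ∈ M ∧ τ ∩ σ = ∅}

/-- `OrdLE M α` is the relation `Ord M ≤ α`:  `Ord ∅ = 0` (so `Ord ∅ ≤ α` always), and for
`M ≠ ∅`, `Ord M ≤ α` iff `Ord M^a < α` for every `a ∈ ℕ`. -/
def OrdLE (M : Set (Finset ℕ)) (α : Ordinal.{0}) : Prop :=
  M = ∅ ∨ ∀ a : ℕ, ∃ β : {β : Ordinal.{0} // β < α}, OrdLE (Msub M {a}) β.1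
termination_by α
decreasing_by exact β.2

/-- `Ord M < α`. -/
def OrdLT (M : Set (Finset ℕ)) (α : Ordinal.{0}) : Prop := ∃ β < α, OrdLE M β

/-- `Ord M = α`. -/
def OrdEq (M : Set (Finset ℕ)) (α : Ordinal.{0}) : Prop := OrdLE M α ∧ ¬ OrdLT M α

/-- `A(X)`: the set of finite nonempty `σ ⊆ ℕ` such that there are *no* uniformly bounded
families `𝒰 i` for `i ∈ σ`, each `𝒰 i` being `i`-disjoint, with `⋃_{i ∈ σ} 𝒰 i` covering `X`. -/
def AX (X : Type*) [PseudoMetricSpace X] : Set (Finset ℕ) :=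
  {σ | σ.Nonempty ∧ ¬ ∃ 𝒰 : ℕ → Set (Set X),
      (∀ i ∈ σ, UniformlyBdd (𝒰 i) ∧ RDisjoint (i : ℝ) (𝒰 i)) ∧
      ∀ x : X, ∃ i ∈ σ, ∃ U ∈ 𝒰 i, x ∈ U}

/-- `trasdim(X) ≤ γ`, i.e. `Ord A(X) ≤ γ`. -/
def TrasdimLE (X : Type*) [PseudoMetricSpace X] (γ : Ordinal.{0}) : Prop := OrdLE (AX X) γ

/-- `trasdim(X) = γ`, i.e. `Ord A(X) = γ`. -/
def TrasdimEq (X : Type*) [PseudoMetricSpace X] (γ : Ordinal.{0}) : Prop := OrdEq (AX X) γ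

/-- Auxiliary for `coasdim`: `CoasdimLEAux A lam n` says `coasdim(A) ≤ lam + n` where `lam` is
a limit ordinal or `0` and `n ∈ ℕ`: for every `r > 0` there are `r`-disjoint uniformly bounded
families `𝒰 0, …, 𝒰 n` of subsets of `A` such that `coasdim(A \ ⋃ i, ⋃₀ 𝒰 i) < lam`
(where `coasdim = -1` exactly for `∅`). -/
def CoasdimLEAux {X : Type*} [PseudoMetricSpace X] (A : Set X) (lam : Ordinal.{0}) (n : ℕ) :
    Prop :=
  ∀ r : ℝ, 0 < r → ∃ 𝒰 : Fin (n + 1) → Set (Set X),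
    (∀ i, (∀ U ∈ 𝒰 i, U ⊆ A) ∧ UniformlyBdd (𝒰 i) ∧ RDisjoint r (𝒰 i)) ∧
    ((A \ ⋃ i, ⋃₀ 𝒰 i) = ∅ ∨
      ∃ q : {q : Ordinal.{0} × ℕ // q.1 + q.2 < lam ∧ (q.1 = 0 ∨ Order.IsSuccLimit q.1)},
        CoasdimLEAux (A \ ⋃ i, ⋃₀ 𝒰 i) q.1.1 q.1.2)
termination_by lam
decreasing_by exact lt_of_le_of_lt le_self_add q.2.1

/-- `coasdim(A) ≤ γ` for a subset `A` of an ambient metric space (with the induced metric). -/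
def CoasdimLE {X : Type*} [PseudoMetricSpace X] (A : Set X) (γ : Ordinal.{0}) : Prop :=
  ∃ lam : Ordinal.{0}, ∃ n : ℕ, (lam = 0 ∨ Order.IsSuccLimit lam) ∧ γ = lam + n ∧ CoasdimLEAux A lam n

/-- `coasdim(A) = γ`. -/
def CoasdimEq {X : Type*} [PseudoMetricSpace X] (A : Set X) (γ : Ordinal.{0}) : Prop :=
  CoasdimLE A γ ∧ ∀ β < γ, ¬ CoasdimLE A β

/-- `1 + 2 + ⋯ + (i-1) = i(i-1)/2`, as a real number. -/
def triHalf (i : ℕ) : ℝ := ((i * (i - 1)) / 2 : ℕ)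

/-- The asymptotic union `as⊔_{i=1}^∞ Z_i` of a sequence of subspaces `Z_i = S i` of an ambient
metric space `Z` (indices with `S i = ∅` are vacuous; in particular take `S 0 = ∅` to start
the union at `i = 1`). A point is a pair `(i, x)` with `x ∈ S i`. -/
structure AsUnion {Z : Type*} (S : ℕ → Set Z) where
  idx : ℕ
  pt : S idx

/-- The metric of the asymptotic union: `d((l,x),(k,y)) = d_Z(x,y) + c` where, for `l ≤ k`,
`c = 0` if `l = k` and `c = l + (l+1) + ⋯ + (k-1)` if `l < k`. -/
instance AsUnion.instPseudoMetricSpace {Z : Type*} [PseudoMetricSpace Z] (S : ℕ → Set Z) :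
    PseudoMetricSpace (AsUnion S) where
  dist p q := dist (p.pt : Z) (q.pt : Z) + |triHalf p.idx - triHalf q.idx|
  dist_self p := by simp
  dist_comm p q := by
    show dist (p.pt : Z) (q.pt : Z) + |triHalf p.idx - triHalf q.idx|
      = dist (q.pt : Z) (p.pt : Z) + |triHalf q.idx - triHalf p.idx|
    rw [dist_comm, abs_sub_comm]
  dist_triangle p q r := by
    show dist (p.pt : Z) (r.pt : Z) + |triHalf p.idx - triHalf r.idx|
      ≤ (dist (p.pt : Z) (q.pt : Z) + |triHalf p.idx - triHalf q.idx|)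
        + (dist (q.pt : Z) (r.pt : Z) + |triHalf q.idx - triHalf r.idx|)
    have h1 := dist_triangle (p.pt : Z) (q.pt : Z) (r.pt : Z)
    have h2 := abs_sub_le (triHalf p.idx) (triHalf q.idx) (triHalf r.idx)
    linarith

/-- The ambient space `⊕ ℝ` of sequences, realized inside the bounded
functions `ℕ →ᵇ ℝ` with the sup-metric. -/
abbrev Amb : Type := BoundedContinuousFunction ℕ ℝ

/-- `t ∈ 2^n ℤ`. -/
def IsMultiple (n : ℕ) (t : ℝ) : Prop := ∃ m : ℤ, t = (m : ℝ) * 2 ^ n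

/-- `X_{ω+k}^{(i,n)} = {x ∈ ℝ^i : #{j : x_j ∉ 2^n ℤ} ≤ k}`, realized as the subset of `⊕ ℝ`
of sequences supported on the first `i` coordinates. -/
def XSet (k i n : ℕ) : Set Amb :=
  {f | (∀ j, i ≤ j → f j = 0) ∧ ({j | j < i ∧ ¬ IsMultiple n (f j)}).ncard ≤ k}

/-- `X_{ω+k} = as⊔_{i=1}^∞ X_{ω+k}^{(i)}` where `X_{ω+k}^{(i)} = X_{ω+k}^{(i,i)}`. -/
def XOmegaPlus (k : ℕ) : Type := AsUnion (fun i => if i = 0 then (∅ : Set Amb) else XSet k i i)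

instance (k : ℕ) : PseudoMetricSpace (XOmegaPlus k) :=
  AsUnion.instPseudoMetricSpace _

/-- `as⊔_{i=n}^∞ X_{ω+k}^{(i,n)}`. -/
def XTail (k n : ℕ) : Type := AsUnion (fun i => if i < n then (∅ : Set Amb) else XSet k i n)

instance (k n : ℕ) : PseudoMetricSpace (XTail k n) :=
  AsUnion.instPseudoMetricSpace _

/-- `Y_{ω+k}^{(i)} = {x ∈ (2^k ℤ)^i : #{j : x_j ∉ 2^i ℤ} ≤ k}` inside `⊕ ℝ`. -/
def YSet (k i : ℕ) : Set Amb :=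
  {f | (∀ j, i ≤ j → f j = 0) ∧ (∀ j, j < i → IsMultiple k (f j)) ∧
    ({j | j < i ∧ ¬ IsMultiple i (f j)}).ncard ≤ k}

/-- `Y_{ω+k} = as⊔_{i=1}^∞ Y_{ω+k}^{(i)}`. -/
def YOmegaPlus (k : ℕ) : Type := AsUnion (fun i => if i = 0 then (∅ : Set Amb) else YSet k i)

instance (k : ℕ) : PseudoMetricSpace (YOmegaPlus k) :=
  AsUnion.instPseudoMetricSpace _

/-- `ℝ^i` inside `⊕ ℝ`. -/
def RSet (i : ℕ) : Set Amb := {f | ∀ j, i ≤ j → f j = 0}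

/-- The ambient space `as⊔_{i=1}^∞ ℝ^i`. -/
def AsR : Type := AsUnion (fun i => if i = 0 then (∅ : Set Amb) else RSet i)

instance : PseudoMetricSpace AsR := AsUnion.instPseudoMetricSpace _

/-- `Y_{ω+k}` viewed as a subspace of `as⊔_{i=1}^∞ ℝ^i`. -/
def YSub (k : ℕ) : Set AsR := {p | (p.pt : Amb) ∈ YSet k p.idx}

/-- `Y_{2ω} = as⊔_{k=1}^∞ Y_{ω+k}`, the `Y_{ω+k}` being subspaces of `as⊔_{i=1}^∞ ℝ^i`. -/
def Y2Omega : Type := AsUnion (fun k => if k = 0 then (∅ : Set AsR) else YSub k)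

instance : PseudoMetricSpace Y2Omega := AsUnion.instPseudoMetricSpace _

/-- A family covers the space. -/
def Covers {X : Type*} (𝒰 : Set (Set X)) : Prop := ∀ x : X, ∃ U ∈ 𝒰, x ∈ U

/-- The Lebesgue number `L(𝒰) = inf_{x ∈ X} sup {r > 0 : ∃ U ∈ 𝒰, B(x,r) ⊆ U}`,
valued in `ℝ≥0∞`. -/
def lebesgueNum {X : Type*} [PseudoMetricSpace X] (𝒰 : Set (Set X)) : ℝ≥0∞ :=
  ⨅ x : X, sSup {e : ℝ≥0∞ | ∃ r : ℝ, 0 < r ∧ e = ENNReal.ofReal r ∧ ∃ U ∈ 𝒰, Metric.ball x r ⊆ U}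

/-- The multiplicity `m(𝒰)`: the maximal number of members of `𝒰` with nonempty
intersection, valued in `ℕ∞`. -/
def covMult {X : Type*} (𝒰 : Set (Set X)) : ℕ∞ :=
  sSup {m : ℕ∞ | ∃ t : Finset (Set X), ↑t ⊆ 𝒰 ∧ (⋂₀ (t : Set (Set X))).Nonempty ∧ m = t.card}

/-- The asymptotic dimension function
`ad_X(λ) = min {m(𝒰) : 𝒰 a uniformly bounded cover of X with L(𝒰) ≥ λ} - 1`. -/
def adim (X : Type*) [PseudoMetricSpace X] (lam : ℝ) : ℕ∞ :=
  sInf {m : ℕ∞ | ∃ 𝒰 : Set (Set X), UniformlyBdd 𝒰 ∧ Covers 𝒰 ∧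
    ENNReal.ofReal lam ≤ lebesgueNum 𝒰 ∧ m = covMult 𝒰} - 1

/-- `(2^k ℤ)^n` as a subset of `ℝ^n` (the latter carrying the sup-metric). -/
def grid (k n : ℕ) : Set (Fin n → ℝ) := {x | ∀ j, IsMultiple k (x j)}

/-- `g̃(r) = max {k ∈ ℕ : ad_{(2^k ℤ)^{g(r)}}(r) = g(r)}`. -/
def gtilde (g : ℝ → ℕ) (r : ℝ) : ℕ :=
  sSup {k : ℕ | adim (grid k (g r)) r = (g r : ℕ∞)}

/-- `(2^k ℤ)^n` realized inside `⊕ ℝ`: sequences supported on the first `n` coordinates,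
with those coordinates in `2^k ℤ`. -/
def gridSet (k n : ℕ) : Set Amb :=
  {f | (∀ j, n ≤ j → f j = 0) ∧ ∀ j, j < n → IsMultiple k (f j)}

/-- `X_ω(g) = as⊔_{i=1}^∞ (2^{g̃(i)} ℤ)^{g(i)}`. -/
def XOmegaG (g : ℝ → ℕ) : Type :=
  AsUnion (fun i => if i = 0 then (∅ : Set Amb) else gridSet (gtilde g (i : ℝ)) (g (i : ℝ)))

instance (g : ℝ → ℕ) : PseudoMetricSpace (XOmegaG g) := AsUnion.instPseudoMetricSpace _

/-- `f : X → Y` is a coarse equivalence: a coarse embedding with coarsely dense image. -/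
def IsCoarseEquiv {X Y : Type*} [PseudoMetricSpace X] [PseudoMetricSpace Y] (f : X → Y) : Prop :=
  (∃ p₁ p₂ : ℝ → ℝ, Monotone p₁ ∧ Monotone p₂ ∧
      Tendsto p₁ atTop atTop ∧ Tendsto p₂ atTop atTop ∧
      ∀ x₁ x₂ : X, p₁ (dist x₁ x₂) ≤ dist (f x₁) (f x₂) ∧ dist (f x₁) (f x₂) ≤ p₂ (dist x₁ x₂)) ∧
  ∃ R : ℝ, 0 < R ∧ ∀ y : Y, ∃ x : X, dist y (f x) < R

/-- A family `𝒳` (of subsets of an ambient space) is `r`-decomposable over a family `𝒴`: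
each `A ∈ 𝒳` splits as `A = A₀ ∪ A₁`, each `A_i` being an `r`-disjoint union of members
of a subfamily of `𝒴`. -/
def RDecomp {X : Type*} [PseudoMetricSpace X] (r : ℝ) (F G : Set (Set X)) : Prop :=
  ∀ A ∈ F, ∃ A₀ A₁ : Set X, A = A₀ ∪ A₁ ∧
    (∃ P ⊆ G, A₀ = ⋃₀ P ∧ RDisjoint r P) ∧
    (∃ P ⊆ G, A₁ = ⋃₀ P ∧ RDisjoint r P)

/-- `F ∈ D_α`, finite decomposition complexity: `D_0` consists of the bounded
families, and for `α > 0`, `F ∈ D_α` iff for every `r > 0` there are `β < α` and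
`G ∈ D_β` such that `F` is `r`-decomposable over `G`. -/
def InD {X : Type*} [PseudoMetricSpace X] (F : Set (Set X)) (α : Ordinal.{0}) : Prop :=
  if α = 0 then ∃ R : ℝ, ∀ A ∈ F, ∀ x ∈ A, ∀ y ∈ A, dist x y ≤ R
  else ∀ r : ℝ, 0 < r → ∃ β : {β : Ordinal.{0} // β < α},
    ∃ G : Set (Set X), InD G β.1 ∧ RDecomp r F G
termination_by α
decreasing_by exact β.2

end AsympPaper


open AsympPaper

/-!
Split `𝒰` into the members reaching the level `x k ≥ B/2` and the others. Having diameter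
at most `B/3`, the former stay in `x k ≥ B/6` and the latter in `x k < B/2`. Thickening both
unions by `c ≤ ε/2` and adding the slabs `x k > B/2 + c` and `x k < B/6 - c` gives two open
sets, disjoint because `𝒰` is `ε`-disjoint, covering `⋃₀ 𝒰` and the two faces. What remains
of `L` lies in the band `B/6 - c ≤ x k ≤ B/2 + c`, at distance more than `ε` from both faces.
-/

namespace AsympPaper

variable {X : Type*} [PseudoMetricSpace X]

lemma _root_.LipschitzWith.le_add_dist {f : X → ℝ} (hf : LipschitzWith 1 f) (x y : X) :
    f x ≤ f y + dist x y := by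
  simpa using hf.le_add_mul x y

lemma ofReal_lt_setEDist {A B : Set X} {r r' : ℝ} (hr : 0 ≤ r) (hrr' : r < r')
    (h : ∀ a ∈ A, ∀ b ∈ B, r' ≤ dist a b) : ENNReal.ofReal r < setEDist A B :=
  ((ENNReal.ofReal_lt_ofReal_iff (hr.trans_lt hrr')).mpr hrr').trans_le <|
    le_iInf₂ fun a ha => le_iInf₂ fun b hb => edist_dist a b ▸ ENNReal.ofReal_le_ofReal (h a ha b hb)

lemma RDisjoint.lt_dist {r : ℝ} {𝒰 : Set (Set X)} (h𝒰 : RDisjoint r 𝒰) {U V : Set X}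
    (hU : U ∈ 𝒰) (hV : V ∈ 𝒰) (hUV : U ≠ V) {x y : X} (hx : x ∈ U) (hy : y ∈ V) :
    r < dist x y := by
  have := (h𝒰 U hU V hV hUV).trans_le ((iInf₂_le x hx).trans (iInf₂_le y hy))
  rw [edist_dist, ENNReal.ofReal_lt_ofReal_iff'] at this
  exact this.1

theorem RDisjoint.exists_isOpen_separation {f : X → ℝ} (hf : LipschitzWith 1 f)
    {𝒰 : Set (Set X)} {ε δ s c : ℝ} (hdisj : RDisjoint ε 𝒰)
    (hδ : ∀ V ∈ 𝒰, ∀ u ∈ V, ∀ v ∈ V, dist u v ≤ δ) (hδ₀ : 0 ≤ δ) (hc : 0 < c)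
    (hcε : 2 * c ≤ ε) :
    ∃ U₀ W₀ : Set X, IsOpen U₀ ∧ IsOpen W₀ ∧ Disjoint U₀ W₀ ∧ ⋃₀ 𝒰 ⊆ U₀ ∪ W₀ ∧
      {x | s + c < f x} ⊆ U₀ ∧ {x | f x < s - δ - c} ⊆ W₀ := by
  set 𝒰hi := {V ∈ 𝒰 | ∃ v ∈ V, s ≤ f v}
  have above : ∀ V ∈ 𝒰hi, ∀ u ∈ V, s - δ ≤ f u := by
    rintro V ⟨hV, v, hv, hsv⟩ u hu
    linarith [hf.le_add_dist v u, hδ V hV v hv u hu]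
  have below : ∀ V ∈ 𝒰 \ 𝒰hi, ∀ u ∈ V, f u < s := fun V hV u hu =>
    not_le.mp fun hsu => hV.2 ⟨hV.1, u, hu, hsu⟩
  refine ⟨{x | s + c < f x} ∪ thickening c (⋃₀ 𝒰hi),
    {x | f x < s - δ - c} ∪ thickening c (⋃₀ (𝒰 \ 𝒰hi)),
    (isOpen_lt continuous_const hf.continuous).union isOpen_thickening,
    (isOpen_lt hf.continuous continuous_const).union isOpen_thickening, ?_, ?_,
    subset_union_left, subset_union_left⟩
  · refine Set.disjoint_left.mpr ?_
    rintro x (hx | hx) (hy | hy)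
    · linarith [hx.out, hy.out]
    · obtain ⟨z, ⟨V, hV, hzV⟩, hxz⟩ := mem_thickening_iff.mp hy
      linarith [below V hV z hzV, hf.le_add_dist x z, hx.out]
    · obtain ⟨z, ⟨V, hV, hzV⟩, hxz⟩ := mem_thickening_iff.mp hx
      linarith [above V hV z hzV, hf.le_add_dist z x, dist_comm x z, hy.out]
    · obtain ⟨z, ⟨V, hV, hzV⟩, hxz⟩ := mem_thickening_iff.mp hx
      obtain ⟨z', ⟨V', hV', hzV'⟩, hxz'⟩ := mem_thickening_iff.mp hy
      have hVV' : V ≠ V' := fun h => hV'.2 (h ▸ hV)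
      linarith [hdisj.lt_dist hV.1 hV'.1 hVV' hzV hzV', dist_triangle_left z z' x]
  · rintro x ⟨V, hV, hxV⟩
    by_cases hVhi : V ∈ 𝒰hi
    · exact Or.inl (Or.inr (self_subset_thickening hc _ ⟨V, hVhi, hxV⟩))
    · exact Or.inr (Or.inr (self_subset_thickening hc _ ⟨V, ⟨hV, hVhi⟩, hxV⟩))

end AsympPaper

theorem statement_0_general (n : ℕ) (B : ℝ) (k : Fin n)
    (ε : ℝ) (hε : 0 < ε) (hεB : ε < B / 6)
    (L : Set (Fin n → ℝ)) (hL : L ⊆ {x | ∀ j, x j ∈ Set.Icc 0 B})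
    (𝒰 : Set (Set (Fin n → ℝ))) (h𝒰 : ∀ U ∈ 𝒰, U ⊆ L)
    (hdisj : RDisjoint ε 𝒰) (hbd : ∀ U ∈ 𝒰, Metric.diam U ≤ B / 3) :
    ∃ L' U W : Set (Fin n → ℝ),
      L' ⊆ L ∩ (⋃₀ 𝒰)ᶜ ∧
      (∃ U₀, IsOpen U₀ ∧ U = U₀ ∩ L) ∧ (∃ W₀, IsOpen W₀ ∧ W = W₀ ∩ L) ∧
      {x | (∀ j, x j ∈ Set.Icc 0 B) ∧ x k = B} ∩ L ⊆ U ∧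
      {x | (∀ j, x j ∈ Set.Icc 0 B) ∧ x k = 0} ∩ L ⊆ W ∧
      L = U ∪ L' ∪ W ∧ U ∩ L' = ∅ ∧ U ∩ W = ∅ ∧ L' ∩ W = ∅ ∧
      ENNReal.ofReal ε < setEDist L' ({x | (∀ j, x j ∈ Set.Icc 0 B) ∧ x k = B} ∩ L) ∧
      ENNReal.ofReal ε < setEDist L' ({x | (∀ j, x j ∈ Set.Icc 0 B) ∧ x k = 0} ∩ L) := by
  obtain ⟨c, hc, hcε, hcB⟩ : ∃ c, 0 < c ∧ 2 * c ≤ ε ∧ c < B / 6 - ε := by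
    have := lt_min hε (sub_pos.mpr hεB)
    exact ⟨min ε (B / 6 - ε) / 2, by linarith, by linarith [min_le_left ε (B / 6 - ε)],
      by linarith [min_le_right ε (B / 6 - ε)]⟩
  have hcube : Bornology.IsBounded L := (isBounded_Icc (0 : Fin n → ℝ) fun _ => B).subset
    fun x hx => ⟨fun j => (hL hx j).1, fun j => (hL hx j).2⟩
  have hdist : ∀ V ∈ 𝒰, ∀ u ∈ V, ∀ v ∈ V, dist u v ≤ B / 3 := fun V hV u hu v hv =>
    (dist_le_diam_of_mem (hcube.subset (h𝒰 V hV)) hu hv).trans (hbd V hV)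
  obtain ⟨U₀, W₀, hU₀, hW₀, hUW, hcover, htop, hbot⟩ :=
    hdisj.exists_isOpen_separation (LipschitzWith.eval k) hdist (by linarith) hc hcε (s := B / 2)
  have hband : ∀ a ∈ L \ (U₀ ∪ W₀), B / 6 - c ≤ a k ∧ a k ≤ B / 2 + c := fun a ha =>
    ⟨le_of_not_gt fun h => ha.2 (Or.inr (hbot (show a k < B / 2 - B / 3 - c by linarith))),
      le_of_not_gt fun h => ha.2 (Or.inl (htop h))⟩
  refine ⟨L \ (U₀ ∪ W₀), U₀ ∩ L, W₀ ∩ L, fun x hx => ⟨hx.1, fun h => hx.2 (hcover h)⟩,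
    ⟨U₀, hU₀, rfl⟩, ⟨W₀, hW₀, rfl⟩,
    fun x hx => ⟨htop (show B / 2 + c < x k by linarith [hx.1.2]), hx.2⟩,
    fun x hx => ⟨hbot (show x k < B / 2 - B / 3 - c by linarith [hx.1.2]), hx.2⟩,
    ?_, ?_, (hUW.mono inter_subset_left inter_subset_left).inter_eq, ?_,
    ofReal_lt_setEDist hε.le (r' := B / 2 - c) (by linarith) fun a ha b hb => ?_,
    ofReal_lt_setEDist hε.le (r' := B / 6 - c) (by linarith) fun a ha b hb => ?_⟩
  · ext x
    simp only [mem_union, mem_inter_iff, Set.mem_sdiff]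
    tauto
  · exact eq_empty_of_forall_notMem fun x hx => hx.2.2 (Or.inl hx.1.1)
  · exact eq_empty_of_forall_notMem fun x hx => hx.1.2 (Or.inr hx.2.1)
  · linarith [(hband a ha).2, hb.1.2, (LipschitzWith.eval k).le_add_dist b a, dist_comm a b]
  · linarith [(hband a ha).1, hb.1.2, (LipschitzWith.eval k).le_add_dist a b]

/-- Let `B > 0`, `n ∈ ℕ`, and equip the cube `[0,B]^n ⊆ ℝ^n` with the
sup-metric. For `k ∈ {1,…,n}` let `F_k^+`, `F_k^-` be the corresponding pair of opposite
faces. Let `0 < ε < B/6`, let `L ⊆ [0,B]^n`, and let `𝒰` be an `ε`-disjoint family of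
subsets of `L` with `diam U ≤ B/3` for every `U ∈ 𝒰`. Then there exists an `ε`-partition
`L'` of `L` between `F_k^+ ∩ L` and `F_k^- ∩ L` such that `L' ⊆ L ∩ (⋃ 𝒰)ᶜ`. -/
theorem statement_0 (n : ℕ) (B : ℝ) (hB : 0 < B) (k : Fin n)
    (ε : ℝ) (hε : 0 < ε) (hεB : ε < B / 6)
    (L : Set (Fin n → ℝ)) (hL : L ⊆ {x | ∀ j, x j ∈ Set.Icc 0 B})
    (𝒰 : Set (Set (Fin n → ℝ))) (h𝒰 : ∀ U ∈ 𝒰, U ⊆ L)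
    (hdisj : RDisjoint ε 𝒰) (hbd : ∀ U ∈ 𝒰, Metric.diam U ≤ B / 3) :
    ∃ L' U W : Set (Fin n → ℝ),
      L' ⊆ L ∩ (⋃₀ 𝒰)ᶜ ∧
      (∃ U₀, IsOpen U₀ ∧ U = U₀ ∩ L) ∧ (∃ W₀, IsOpen W₀ ∧ W = W₀ ∩ L) ∧
      {x | (∀ j, x j ∈ Set.Icc 0 B) ∧ x k = B} ∩ L ⊆ U ∧
      {x | (∀ j, x j ∈ Set.Icc 0 B) ∧ x k = 0} ∩ L ⊆ W ∧
      L = U ∪ L' ∪ W ∧ U ∩ L' = ∅ ∧ U ∩ W = ∅ ∧ L' ∩ W = ∅ ∧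
      ENNReal.ofReal ε < setEDist L' ({x | (∀ j, x j ∈ Set.Icc 0 B) ∧ x k = B} ∩ L) ∧
      ENNReal.ofReal ε < setEDist L' ({x | (∀ j, x j ∈ Set.Icc 0 B) ∧ x k = 0} ∩ L) :=
  statement_0_general n B k ε hε hεB L hL 𝒰 h𝒰 hdisj hbd

end
end

section
/- Let M ⊆ Fin ℕ, let k ∈ ℕ ∪ {0}, and let α be an infinite ordinal. Then Ord M ≤ α + k if and only if Ord M^τ < α for every τ ∈ Fin ℕ with |τ| = k + 1. -/
open Metric Set Filter ENNReal

noncomputable section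

open AsympPaper

/-! Since `Ord M ≤ γ + 1` amounts to `Ord M^a ≤ γ` for every `a`, and `(M^a)^σ = M^{σ ∪ {a}}` for
`a ∉ σ` (while `(M^a)^σ = ∅` for `a ∈ σ`), induction on `k` removes one point of `τ` at a time;
the base case `k = 0` is the definition of `Ord M ≤ α` read for `α > 0`. -/

namespace AsympPaper

variable {M : Set (Finset ℕ)}

theorem ordLE_iff {α : Ordinal.{0}} :
    OrdLE M α ↔ M = ∅ ∨ ∀ a : ℕ, OrdLT (Msub M {a}) α := by
  rw [OrdLE]
  simp only [OrdLT, Subtype.exists, exists_prop]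

@[simp]
theorem Msub_empty (σ : Finset ℕ) : Msub ∅ σ = ∅ := by
  ext τ
  simp [Msub]

theorem ordLE_empty (α : Ordinal.{0}) : OrdLE ∅ α :=
  ordLE_iff.mpr (Or.inl rfl)

theorem ordLT_empty {α : Ordinal.{0}} (hα : 0 < α) : OrdLT ∅ α :=
  ⟨0, hα, ordLE_empty 0⟩

theorem OrdLE.mono {β γ : Ordinal.{0}} (h : OrdLE M β) (hβγ : β ≤ γ) :
    OrdLE M γ := by
  rw [ordLE_iff] at h ⊢
  refine h.imp_right fun h a => ?_
  obtain ⟨δ, hδ, hle⟩ := h a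
  exact ⟨δ, hδ.trans_le hβγ, hle⟩

theorem ordLE_iff_forall_ordLT {α : Ordinal.{0}} (hα : 0 < α) :
    OrdLE M α ↔ ∀ a : ℕ, OrdLT (Msub M {a}) α := by
  rw [ordLE_iff]
  refine ⟨?_, Or.inr⟩
  rintro (rfl | h) a
  · simpa using ordLT_empty hα
  · exact h a

theorem ordLE_add_one_iff {γ : Ordinal.{0}} :
    OrdLE M (γ + 1) ↔ ∀ a : ℕ, OrdLE (Msub M {a}) γ := by
  rw [ordLE_iff_forall_ordLT (by simp)]
  refine forall_congr' fun a => ⟨fun ⟨β, hβ, h⟩ => h.mono ?_, fun h => ⟨γ, lt_add_one γ, h⟩⟩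
  rwa [Order.lt_add_one_iff] at hβ

theorem Msub_Msub {σ ρ : Finset ℕ} (h : Disjoint σ ρ) :
    Msub (Msub M σ) ρ = Msub M (σ ∪ ρ) := by
  ext τ
  simp only [Msub, Set.mem_ofPred_eq, ← Finset.disjoint_iff_inter_eq_empty,
    Finset.disjoint_union_left, Finset.disjoint_union_right, Finset.union_assoc,
    Finset.union_comm ρ σ]
  constructor
  · rintro ⟨hτ, ⟨-, hM, hτσ, -⟩, hτρ⟩
    exact ⟨hτ, hM, hτσ, hτρ⟩
  · rintro ⟨hτ, hM, hτσ, hτρ⟩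
    exact ⟨hτ, ⟨hτ.mono Finset.subset_union_left, hM, hτσ, h.symm⟩, hτρ⟩

theorem Msub_Msub_of_not_disjoint {σ ρ : Finset ℕ} (h : ¬Disjoint σ ρ) :
    Msub (Msub M σ) ρ = ∅ := by
  ext τ
  simp only [Msub, Set.mem_ofPred_eq, Set.mem_empty_iff_false, iff_false,
    ← Finset.disjoint_iff_inter_eq_empty, Finset.disjoint_union_left]
  rintro ⟨-, ⟨-, -, -, hρσ⟩, -⟩
  exact h hρσ.symm

theorem forall_ordLT_Msub_Msub_iff {α : Ordinal.{0}} (hα : 0 < α) (k : ℕ) :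
    (∀ (a : ℕ) (σ : Finset ℕ), σ.card = k → OrdLT (Msub (Msub M {a}) σ) α) ↔
      ∀ τ : Finset ℕ, τ.card = k + 1 → OrdLT (Msub M τ) α := by
  constructor
  · intro h τ hτ
    obtain ⟨a, ha⟩ : τ.Nonempty := Finset.card_pos.mp (by omega)
    have key := h a (τ.erase a) (by rw [Finset.card_erase_of_mem ha, hτ]; rfl)
    rwa [Msub_Msub (Finset.disjoint_singleton_left.mpr (Finset.notMem_erase a τ)),
      ← Finset.insert_eq, Finset.insert_erase ha] at key
  · intro h a σ hσ
    by_cases ha : a ∈ σ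
    · rw [Msub_Msub_of_not_disjoint (by simpa using ha)]
      exact ordLT_empty hα
    · rw [Msub_Msub (Finset.disjoint_singleton_left.mpr ha), ← Finset.insert_eq]
      exact h _ (by rw [Finset.card_insert_of_notMem ha, hσ])

theorem ordLE_add_natCast_iff {α : Ordinal.{0}} (hα : 0 < α) (k : ℕ) :
    OrdLE M (α + k) ↔ ∀ τ : Finset ℕ, τ.card = k + 1 → OrdLT (Msub M τ) α := by
  induction k generalizing M with
  | zero => simp [ordLE_iff_forall_ordLT hα, Finset.card_eq_one]
  | succ k ih =>
    rw [Nat.cast_succ, ← add_assoc, ordLE_add_one_iff]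
    simp only [ih]
    exact forall_ordLT_Msub_Msub_iff hα (k + 1)

end AsympPaper

theorem statement_1_general (M : Set (Finset ℕ))
    (k : ℕ) (α : Ordinal.{0}) (hα : Ordinal.omega0 ≤ α) :
    OrdLE M (α + k) ↔
      ∀ τ : Finset ℕ, τ.Nonempty → τ.card = k + 1 → OrdLT (Msub M τ) α := by
  rw [ordLE_add_natCast_iff (Ordinal.omega0_pos.trans_le hα)]
  exact forall_congr' fun τ =>
    ⟨fun h _ => h, fun h hτ => h (Finset.card_pos.mp (by omega)) hτ⟩

/-- Let `M ⊆ Fin ℕ`, `k ∈ ℕ ∪ {0}`, and let `α` be an infinite ordinal.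
Then `Ord M ≤ α + k` iff `Ord M^τ < α` for every `τ ∈ Fin ℕ` with `|τ| = k + 1`. -/
theorem statement_1 (M : Set (Finset ℕ)) (hM : ∀ σ ∈ M, σ.Nonempty)
    (k : ℕ) (α : Ordinal.{0}) (hα : Ordinal.omega0 ≤ α) :
    OrdLE M (α + k) ↔
      ∀ τ : Finset ℕ, τ.Nonempty → τ.card = k + 1 → OrdLT (Msub M τ) α :=
  statement_1_general M k α hα
end
end

section
/- For every k ∈ ℕ and every natural number r > 1, taking n = 3^{k−1} r, there exist r-disjoint uniformly bounded families U_0, U_1, …, U_k of subsets of as⊔_{i=n}^∞ X_{ω+k}^{(i,n)} such that U_0 ∪ U_1 ∪ ⋯ ∪ U_k covers as⊔_{i=n}^∞ X_{ω+k}^{(i,n)}. -/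
open Metric Set Filter ENNReal

noncomputable section

open AsympPaper

/-!
Cut `ℝ` into the cells `[j u, (j + 1) u]`, `u = 2 ^ n`, and give the cell `j` the colour
`j mod (k + 1)`. Deleting the open cells of colour `c` leaves closed windows of `k` cells, any two
at distance at least `u > n`. The lattice `2 ^ n ℤ` meets no open cell, so a point of
`X_{ω+k}^{(i,n)}` has at most `k` coordinates in open cells and hence avoids the open cells of
some colour `c`: it lies in a product of windows of colour `c`. These products, restricted to one
block of levels `{n, n + 1}, {n + 2}, {n + 3}, …`, have diameter at most `k 2 ^ n + n`, and two
distinct ones are at distance at least `n + 1 > r`: levels `i < i'` with `i' ≥ n + 2` are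
`triHalf i' - triHalf i ≥ i' - 1 ≥ n + 1` apart.
-/

namespace AsympPaper

lemma exists_forall_ne_of_ncard_lt {α β : Type*} [Finite β] {s : Set α} (hs : s.Finite)
    (f : α → β) (h : s.ncard < Nat.card β) : ∃ b, ∀ a ∈ s, f a ≠ b := by
  obtain ⟨b, -, hb⟩ := Set.exists_mem_notMem_of_ncard_lt_ncard (s := f '' s) (t := univ)
    (by rw [ncard_univ]; exact (ncard_image_le hs).trans_lt h) (hs.image f)
  exact ⟨b, fun a ha hab => hb ⟨a, ha, hab⟩⟩

lemma rDisjoint_of_le_dist {X : Type*} [PseudoMetricSpace X] {r d : ℝ} (hrd : r < d)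
    (hd : 0 < d) {𝒰 : Set (Set X)}
    (h : ∀ U ∈ 𝒰, ∀ V ∈ 𝒰, U ≠ V → ∀ x ∈ U, ∀ y ∈ V, d ≤ dist x y) : RDisjoint r 𝒰 := by
  intro U hU V hV hUV
  calc ENNReal.ofReal r < ENNReal.ofReal d := ENNReal.ofReal_lt_ofReal_iff'.2 ⟨hrd, hd⟩
    _ ≤ setEDist U V := le_iInf₂ fun x hx => le_iInf₂ fun y hy => by
        rw [edist_dist]; exact ENNReal.ofReal_le_ofReal (h U hU V hV hUV x hx y hy)

section Windows

variable {k : ℕ} {u : ℝ}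

/-- For `(i : ZMod (k + 1)) = c` these are the closed intervals left over when the open cells
`(j u, (j + 1) u)` with `(j : ZMod (k + 1)) = c` are removed from `ℝ`. -/
def window (k : ℕ) (u : ℝ) (i : ℤ) : Set ℝ := Icc ((i + 1) * u) ((i + 1 + k) * u)

lemma abs_sub_le_of_mem_window {i : ℤ} {x y : ℝ} (hx : x ∈ window k u i)
    (hy : y ∈ window k u i) : |x - y| ≤ k * u := by
  obtain ⟨hx₁, hx₂⟩ := hx
  obtain ⟨hy₁, hy₂⟩ := hy
  rw [abs_sub_le_iff]
  constructor <;> linarith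

lemma le_abs_sub_of_mem_window (hu : 0 ≤ u) {i j : ℤ} (hij : (i : ZMod (k + 1)) = j)
    (hne : i ≠ j) {x y : ℝ} (hx : x ∈ window k u i) (hy : y ∈ window k u j) :
    u ≤ |x - y| := by
  wlog h : i < j generalizing i j x y
  · rw [abs_sub_comm]
    exact this hij.symm hne.symm hy hx (by omega)
  have hdvd := (ZMod.intCast_eq_intCast_iff_dvd_sub i j (k + 1)).1 hij
  have hle := Int.le_of_dvd (by omega) hdvd
  push_cast at hle
  have hgap : (i + k + 1 : ℝ) ≤ j := by exact_mod_cast (by omega : i + k + 1 ≤ j)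
  have := mul_le_mul_of_nonneg_right hgap hu
  rw [abs_sub_comm]
  exact le_abs.2 (Or.inl (by linarith [hx.2, hy.1]))

lemma floor_div_eq_of_mem_Ioo (hu : 0 < u) {i : ℤ} {t : ℝ} (ht : t ∈ Ioo (i * u) ((i + 1) * u)) :
    ⌊t / u⌋ = i :=
  Int.floor_eq_iff.2 ⟨(le_div_iff₀ hu).2 ht.1.le, (div_lt_iff₀ hu).2 ht.2⟩

lemma intCast_mul_notMem_Ioo (hu : 0 < u) (z i : ℤ) : z * u ∉ Ioo (i * u) ((i + 1) * u) := by
  rintro ⟨h₁, h₂⟩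
  have h₁ := lt_of_mul_lt_mul_right h₁ hu.le
  have h₂ := lt_of_mul_lt_mul_right h₂ hu.le
  norm_cast at h₁ h₂
  omega

lemma exists_mem_window (hu : 0 < u) (c : ZMod (k + 1)) {t : ℝ}
    (ht : ∀ i : ℤ, (i : ZMod (k + 1)) = c → t ∉ Ioo (i * u) ((i + 1) * u)) :
    ∃ i : ℤ, (i : ZMod (k + 1)) = c ∧ t ∈ window k u i := by
  -- `i` is the last cell of colour `c` with `(i + 1) u ≤ t`
  set q : ℤ := ⌊(t / u - c.val - 1) / (k + 1)⌋
  set i : ℤ := c.val + (k + 1) * q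
  have hi : ∀ m : ℤ, ((i + (k + 1) * m : ℤ) : ZMod (k + 1)) = c := fun m => by
    have h0 : (k : ZMod (k + 1)) + 1 = 0 := by exact_mod_cast ZMod.natCast_self (k + 1)
    push_cast [i]
    simp [h0]
  have hk : (0 : ℝ) < k + 1 := by positivity
  have hq₁ := (le_div_iff₀ hk).1 (Int.floor_le ((t / u - c.val - 1) / (k + 1)))
  have hq₂ := (div_lt_iff₀ hk).1 (Int.lt_floor_add_one ((t / u - c.val - 1) / (k + 1)))
  have hlo : (i + 1 : ℝ) ≤ t / u := by push_cast [i]; linarith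
  refine ⟨i, by simpa using hi 0, (le_div_iff₀ hu).1 hlo, ?_⟩
  by_contra hhi
  -- otherwise `t` would lie in the open cell `i + k + 1`, which has colour `c`
  refine ht (i + (k + 1) * 1) (hi 1) ⟨?_, ?_⟩
  · push_cast; linarith
  · rw [← div_lt_iff₀ hu]; push_cast [i]; linarith

end Windows

section Levels

lemma triHalf_succ (i : ℕ) : triHalf (i + 1) = triHalf i + i := by
  have key : (i + 1) * (i + 1 - 1) / 2 = i * (i - 1) / 2 + i := by
    rcases i with _ | i
    · rfl
    · rw [show (i + 1 + 1) * (i + 1 + 1 - 1) = (i + 1) * (i + 1 - 1) + (i + 1) * 2 by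
        simp only [Nat.add_sub_cancel]; ring, Nat.add_mul_div_right _ _ two_pos]
  simp only [triHalf, key, Nat.cast_add]

lemma triHalf_mono : Monotone triHalf :=
  monotone_nat_of_le_succ fun i => by rw [triHalf_succ]; linarith [(i.cast_nonneg : (0 : ℝ) ≤ i)]

lemma sub_one_le_triHalf_sub {i j : ℕ} (h : i < j) : (j : ℝ) - 1 ≤ triHalf j - triHalf i := by
  obtain ⟨j, rfl⟩ : ∃ j', j = j' + 1 := ⟨j - 1, by omega⟩
  rw [triHalf_succ]
  push_cast
  linarith [triHalf_mono (show i ≤ j by omega)]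

variable {n i j : ℕ}

lemma abs_triHalf_sub_le (hi : n ≤ i) (hj : n ≤ j) (h : max i (n + 1) = max j (n + 1)) :
    |triHalf i - triHalf j| ≤ n := by
  by_cases hij : i = j
  · simp [hij]
  have hin : i ≤ n + 1 := by omega
  have hjn : j ≤ n + 1 := by omega
  have := triHalf_succ n
  rw [abs_sub_le_iff]
  constructor <;> linarith [triHalf_mono hi, triHalf_mono hj, triHalf_mono hin, triHalf_mono hjn]

lemma le_abs_triHalf_sub (hi : n ≤ i) (hj : n ≤ j) (h : max i (n + 1) ≠ max j (n + 1)) :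
    n + 1 ≤ |triHalf i - triHalf j| := by
  wlog hij : i < j generalizing i j
  · rw [abs_sub_comm]
    exact this hj hi (Ne.symm h) (by omega)
  have := sub_one_le_triHalf_sub hij
  have hj : (n + 2 : ℝ) ≤ j := by exact_mod_cast (by omega : n + 2 ≤ j)
  rw [abs_sub_comm]
  exact le_abs.2 (Or.inl (by linarith))

end Levels

namespace XTail

variable {k n : ℕ}

lemma le_idx_and_pt_mem (x : XTail k n) : n ≤ x.idx ∧ (x.pt : Amb) ∈ XSet k x.idx n := by
  have hx : (x.pt : Amb) ∈ if x.idx < n then ∅ else XSet k x.idx n := x.pt.2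
  split_ifs at hx with h
  · exact absurd hx (notMem_empty _)
  · exact ⟨not_lt.1 h, hx⟩

lemma dist_eq (x y : XTail k n) :
    dist x y = dist (x.pt : Amb) y.pt + |triHalf x.idx - triHalf y.idx| :=
  rfl

end XTail

section Tiles

variable {k n : ℕ}

/-- Levels `n` and `n + 1` are only `n` apart, so they form one block; every other level is a
block of its own. -/
def tile (k n b : ℕ) (μ : ℕ → ℤ) : Set (XTail k n) :=
  {x | max x.idx (n + 1) = b ∧ ∀ j, (x.pt : Amb) j ∈ window k (2 ^ n) (μ j)}

def tiles (k n : ℕ) (c : ZMod (k + 1)) : Set (Set (XTail k n)) :=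
  {U | ∃ b μ, (∀ j, (μ j : ZMod (k + 1)) = c) ∧ U = tile k n b μ}

lemma dist_le_of_mem_tile {b : ℕ} {μ : ℕ → ℤ} {x y : XTail k n} (hx : x ∈ tile k n b μ)
    (hy : y ∈ tile k n b μ) : dist x y ≤ k * 2 ^ n + n := by
  have hpt : dist (x.pt : Amb) y.pt ≤ k * 2 ^ n :=
    (BoundedContinuousFunction.dist_le (by positivity)).2 fun j =>
      abs_sub_le_of_mem_window (hx.2 j) (hy.2 j)
  have hlev := abs_triHalf_sub_le (XTail.le_idx_and_pt_mem x).1 (XTail.le_idx_and_pt_mem y).1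
    (hx.1.trans hy.1.symm)
  rw [XTail.dist_eq]
  linarith

lemma le_dist_of_mem_tile {b b' : ℕ} {μ μ' : ℕ → ℤ} (hμ : ∀ j, (μ j : ZMod (k + 1)) = μ' j)
    (hne : tile k n b μ ≠ tile k n b' μ') {x y : XTail k n} (hx : x ∈ tile k n b μ)
    (hy : y ∈ tile k n b' μ') : n + 1 ≤ dist x y := by
  rw [XTail.dist_eq]
  by_cases hb : b = b'
  · obtain ⟨j, hj⟩ : ∃ j, μ j ≠ μ' j := by
      by_contra! h
      exact hne (by rw [hb, funext h])
    have hsep := le_abs_sub_of_mem_window (by positivity) (hμ j) hj (hx.2 j) (hy.2 j)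
    have hcoord : |(x.pt : Amb) j - (y.pt : Amb) j| ≤ dist (x.pt : Amb) y.pt :=
      by rw [← Real.dist_eq]; exact BoundedContinuousFunction.dist_coe_le_dist j
    have h2n : (n + 1 : ℝ) ≤ 2 ^ n := by exact_mod_cast Nat.lt_two_pow_self
    linarith [abs_nonneg (triHalf x.idx - triHalf y.idx)]
  · have := le_abs_triHalf_sub (XTail.le_idx_and_pt_mem x).1 (XTail.le_idx_and_pt_mem y).1
      (by rw [hx.1, hy.1]; exact hb)
    linarith [dist_nonneg (x := (x.pt : Amb)) (y := y.pt)]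

lemma exists_mem_tiles (x : XTail k n) : ∃ c : ZMod (k + 1), ∃ U ∈ tiles k n c, x ∈ U := by
  obtain ⟨-, hsupp, hcard⟩ := XTail.le_idx_and_pt_mem x
  set f := (x.pt : Amb)
  have hu : (0 : ℝ) < 2 ^ n := by positivity
  obtain ⟨c, hc⟩ := exists_forall_ne_of_ncard_lt
    (s := {j | j < x.idx ∧ ¬ IsMultiple n (f j)}) ((finite_Iio x.idx).subset fun j hj => hj.1)
    (fun j => (⌊f j / 2 ^ n⌋ : ZMod (k + 1))) (by rw [Nat.card_zmod]; omega)
  have hgap : ∀ j, ∀ i : ℤ, (i : ZMod (k + 1)) = c → f j ∉ Ioo ((i : ℝ) * 2 ^ n) ((i + 1) * 2 ^ n) := by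
    intro j i hi hj
    have hoff : ¬ IsMultiple n (f j) := by
      rintro ⟨z, hz⟩
      exact intCast_mul_notMem_Ioo hu z i (hz ▸ hj)
    have hji : j < x.idx := by
      by_contra h
      exact hoff ⟨0, by simp [hsupp j (not_lt.1 h)]⟩
    exact hc j ⟨hji, hoff⟩ (by rw [floor_div_eq_of_mem_Ioo hu hj, hi])
  choose μ hμ using fun j => exists_mem_window (k := k) hu c (hgap j)
  exact ⟨c, _, ⟨_, μ, fun j => (hμ j).1, rfl⟩, rfl, fun j => (hμ j).2⟩

end Tiles

theorem XTail.exists_uniformlyBdd_rDisjoint_cover (k n : ℕ) {r : ℝ} (hr : r < n + 1) :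
    ∃ 𝒰 : Fin (k + 1) → Set (Set (XTail k n)),
      (∀ i, UniformlyBdd (𝒰 i) ∧ RDisjoint r (𝒰 i)) ∧ ∀ x : XTail k n, ∃ i, ∃ U ∈ 𝒰 i, x ∈ U := by
  refine ⟨fun i => tiles k n (i : ℕ), fun i => ⟨?_, ?_⟩, fun x => ?_⟩
  · exact ⟨k * 2 ^ n + n, by rintro _ ⟨b, μ, -, rfl⟩ x hx y hy; exact dist_le_of_mem_tile hx hy⟩
  · refine rDisjoint_of_le_dist hr (by positivity) ?_
    rintro _ ⟨b, μ, hμ, rfl⟩ _ ⟨b', μ', hμ', rfl⟩ hne x hx y hy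
    exact le_dist_of_mem_tile (fun j => (hμ j).trans (hμ' j).symm) hne hx hy
  · obtain ⟨c, U, hU, hxU⟩ := exists_mem_tiles x
    refine ⟨⟨c.val, c.val_lt⟩, U, ?_, hxU⟩
    rwa [← ZMod.natCast_zmod_val c] at hU

end AsympPaper

theorem statement_4_general (k : ℕ) (r : ℕ) :
    ∃ 𝒰 : Fin (k + 1) → Set (Set (XTail k (3 ^ (k - 1) * r))),
      (∀ i, UniformlyBdd (𝒰 i) ∧ RDisjoint (r : ℝ) (𝒰 i)) ∧
      ∀ x : XTail k (3 ^ (k - 1) * r), ∃ i, ∃ U ∈ 𝒰 i, x ∈ U := by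
  have hr : r ≤ 3 ^ (k - 1) * r := Nat.le_mul_of_pos_left r (by positivity)
  exact XTail.exists_uniformlyBdd_rDisjoint_cover k _ (by exact_mod_cast Nat.lt_succ_of_le hr)

/-- For every `k ∈ ℕ` (`k ≥ 1`) and every natural `r > 1`, taking
`n = 3^(k-1) * r`, there exist `r`-disjoint uniformly bounded families `𝒰 0, …, 𝒰 k` of
subsets of `as⊔_{i=n}^∞ X_{ω+k}^{(i,n)}` whose union covers it. -/
theorem statement_4 (k : ℕ) (hk : 1 ≤ k) (r : ℕ) (hr : 1 < r) :
    ∃ 𝒰 : Fin (k + 1) → Set (Set (XTail k (3 ^ (k - 1) * r))),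
      (∀ i, UniformlyBdd (𝒰 i) ∧ RDisjoint (r : ℝ) (𝒰 i)) ∧
      ∀ x : XTail k (3 ^ (k - 1) * r), ∃ i, ∃ U ∈ 𝒰 i, x ∈ U :=
  statement_4_general k r

end
end
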